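/- arXiv:2006.16175 — 3 statements merged into one kernel-verified Lean document; each statement's English description precedes it below -/
import Mathlib

section
/- Let M be a weight sequence satisfying log-convexity (M.1) and suppose there exist C', L' > 0 with 2·ω_M(t) ≤ ω_M(L' t) + C' for all t ≥ 0, where ω_M is the associated function. Then M satisfies moderate growth (M.2): there exist C, L > 0 with M_{p+q} ≤ C L^{p+q} M_p M_q for all p, q ∈ ℕ. -/
open Filter

noncomputable def omegaM (M : ℕ → ℝ) (t : ℝ) : ℝ :=
  ⨆ p : ℕ, Real.log (t ^ p * M 0 / M p)

lemma omegaM_bdd (M : ℕ → ℝ) (hpos : ∀ p, 0 < M p)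
    (hws : Tendsto (fun p : ℕ => (M p) ^ ((p : ℝ)⁻¹)) atTop atTop)
    (s : ℝ) (hs : 0 < s) :
    BddAbove (Set.range fun p : ℕ => Real.log (s ^ p * M 0 / M p)) := by
  obtain ⟨P, hP⟩ := Filter.eventually_atTop.mp (Filter.tendsto_atTop.mp hws (s + 1))
  set f : ℕ → ℝ := fun p => Real.log (s ^ p * M 0 / M p) with hf
  set N := max P 1 with hN
  refine ⟨max (Real.log (M 0)) (((Finset.range N).sup' (by simp [hN]) f)), ?_⟩
  rintro x ⟨p, rfl⟩
  by_cases hp : p < N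
  · exact le_max_of_le_right (Finset.le_sup' f (Finset.mem_range.mpr hp))
  · push_neg at hp
    have hp1 : p ≠ 0 := by omega
    have hPp : P ≤ p := le_trans (le_max_left _ _) hp
    have h1 : s + 1 ≤ M p ^ ((p : ℝ)⁻¹) := hP p hPp
    have h2 : (s + 1) ^ p ≤ M p := by
      calc (s + 1) ^ p ≤ (M p ^ ((p : ℝ)⁻¹)) ^ p := by
            exact pow_le_pow_left₀ (by linarith) h1 p
        _ = M p := Real.rpow_inv_natCast_pow (hpos p).le hp1
    have h3 : s ^ p ≤ M p := le_trans (pow_le_pow_left₀ hs.le (by linarith) p) h2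
    have h4 : s ^ p * M 0 / M p ≤ M 0 := by
      rw [div_le_iff₀ (hpos p)]
      calc s ^ p * M 0 = M 0 * s ^ p := by ring
        _ ≤ M 0 * M p := mul_le_mul_of_nonneg_left h3 (hpos 0).le
        _ = M 0 * M p := rfl
    have hpos4 : 0 < s ^ p * M 0 / M p :=
      div_pos (mul_pos (pow_pos hs p) (hpos 0)) (hpos p)
    exact le_max_of_le_left (Real.log_le_log hpos4 h4)

-- term ≤ omega
lemma le_omegaM (M : ℕ → ℝ) (hpos : ∀ p, 0 < M p)
    (hws : Tendsto (fun p : ℕ => (M p) ^ ((p : ℝ)⁻¹)) atTop atTop)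
    (s : ℝ) (hs : 0 < s) (p : ℕ) :
    s ^ p * M 0 / M p ≤ Real.exp (omegaM M s) := by
  have h1 : Real.log (s ^ p * M 0 / M p) ≤ omegaM M s :=
    le_ciSup (omegaM_bdd M hpos hws s hs) p
  have hpos4 : 0 < s ^ p * M 0 / M p :=
    div_pos (mul_pos (pow_pos hs p) (hpos 0)) (hpos p)
  calc s ^ p * M 0 / M p = Real.exp (Real.log (s ^ p * M 0 / M p)) :=
        (Real.exp_log hpos4).symm
    _ ≤ Real.exp (omegaM M s) := Real.exp_le_exp.mpr h1

lemma ratio_mono (M : ℕ → ℝ) (hpos : ∀ p, 0 < M p)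
    (hM1 : ∀ p : ℕ, 1 ≤ p → (M p) ^ 2 ≤ M (p - 1) * M (p + 1)) :
    Monotone (fun p : ℕ => M (p + 1) / M p) := by
  apply monotone_nat_of_le_succ
  intro p
  have h := hM1 (p + 1) (by omega)
  simp only [Nat.add_sub_cancel] at h
  rw [div_le_div_iff₀ (hpos p) (hpos (p + 1))]
  nlinarith [hpos p, hpos (p+1), hpos (p+2)]

-- key: with t = M(k+1)/M k, t^p * M k ≤ t^k * M p for all p
lemma key (M : ℕ → ℝ) (hpos : ∀ p, 0 < M p)
    (hM1 : ∀ p : ℕ, 1 ≤ p → (M p) ^ 2 ≤ M (p - 1) * M (p + 1)) (k p : ℕ) :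
    (M (k + 1) / M k) ^ p * M k ≤ (M (k + 1) / M k) ^ k * M p := by
  set t := M (k + 1) / M k with ht
  have htpos : 0 < t := div_pos (hpos (k + 1)) (hpos k)
  have hr := ratio_mono M hpos hM1
  have up : ∀ d, t ^ d * M k ≤ M (k + d) := by
    intro d
    induction d with
    | zero => simp
    | succ d ih =>
      have h1 : t ≤ M (k + d + 1) / M (k + d) := hr (Nat.le_add_right k d)
      calc t ^ (d + 1) * M k = t * (t ^ d * M k) := by ring
        _ ≤ t * M (k + d) := by
            exact mul_le_mul_of_nonneg_left ih htpos.le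
        _ ≤ (M (k + d + 1) / M (k + d)) * M (k + d) :=
            mul_le_mul_of_nonneg_right h1 (hpos (k + d)).le
        _ = M (k + d + 1) := div_mul_cancel₀ _ (hpos (k + d)).ne'
  have down : ∀ d q, q + d = k → M k ≤ t ^ d * M q := by
    intro d
    induction d with
    | zero => intro q hq; simp [← hq]
    | succ d ih =>
      intro q hq
      have h1 : M (q + 1) / M q ≤ t := hr (by omega)
      have h2 : M k ≤ t ^ d * M (q + 1) := ih (q + 1) (by omega)
      calc M k ≤ t ^ d * M (q + 1) := h2
        _ = t ^ d * ((M (q + 1) / M q) * M q) := by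
            rw [div_mul_cancel₀ _ (hpos q).ne']
        _ ≤ t ^ d * (t * M q) := by
            apply mul_le_mul_of_nonneg_left _ (by positivity)
            exact mul_le_mul_of_nonneg_right h1 (hpos q).le
        _ = t ^ (d + 1) * M q := by ring
  rcases le_or_gt k p with hkp | hkp
  · obtain ⟨d, rfl⟩ := Nat.exists_eq_add_of_le hkp
    calc t ^ (k + d) * M k = t ^ k * (t ^ d * M k) := by ring
      _ ≤ t ^ k * M (k + d) := mul_le_mul_of_nonneg_left (up d) (by positivity)
  · have hd : p + (k - p) = k := by omega
    have h2 := down (k - p) p hd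
    calc t ^ p * M k ≤ t ^ p * (t ^ (k - p) * M p) :=
          mul_le_mul_of_nonneg_left h2 (by positivity)
      _ = t ^ (p + (k - p)) * M p := by ring
      _ = t ^ k * M p := by rw [hd]

-- omega at t = M(k+1)/M k is attained at k
lemma omegaM_le (M : ℕ → ℝ) (hpos : ∀ p, 0 < M p)
    (hM1 : ∀ p : ℕ, 1 ≤ p → (M p) ^ 2 ≤ M (p - 1) * M (p + 1)) (k : ℕ) :
    Real.exp (omegaM M (M (k + 1) / M k)) ≤ (M (k + 1) / M k) ^ k * M 0 / M k := by
  set t := M (k + 1) / M k with ht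
  have htpos : 0 < t := div_pos (hpos (k + 1)) (hpos k)
  have hX : 0 < t ^ k * M 0 / M k :=
    div_pos (mul_pos (pow_pos htpos k) (hpos 0)) (hpos k)
  have h1 : omegaM M t ≤ Real.log (t ^ k * M 0 / M k) := by
    apply ciSup_le
    intro p
    apply Real.log_le_log (div_pos (mul_pos (pow_pos htpos p) (hpos 0)) (hpos p))
    rw [div_le_div_iff₀ (hpos p) (hpos k)]
    have := key M hpos hM1 k p
    calc t ^ p * M 0 * M k = M 0 * (t ^ p * M k) := by ring
      _ ≤ M 0 * (t ^ k * M p) := mul_le_mul_of_nonneg_left this (hpos 0).le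
      _ = t ^ k * M 0 * M p := by ring
  calc Real.exp (omegaM M t) ≤ Real.exp (Real.log (t ^ k * M 0 / M k)) :=
        Real.exp_le_exp.mpr h1
    _ = t ^ k * M 0 / M k := Real.exp_log hX

theorem stmt_2 (M : ℕ → ℝ) (hpos : ∀ p, 0 < M p)
    (hws : Tendsto (fun p : ℕ => (M p) ^ ((p : ℝ)⁻¹)) atTop atTop)
    (hM1 : ∀ p : ℕ, 1 ≤ p → (M p) ^ 2 ≤ M (p - 1) * M (p + 1))
    (h : ∃ C' > 0, ∃ L' > 0, ∀ t : ℝ, 0 ≤ t →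
      2 * omegaM M t ≤ omegaM M (L' * t) + C') :
    ∃ C > 0, ∃ L > 0, ∀ p q : ℕ, M (p + q) ≤ C * L ^ (p + q) * M p * M q := by
  obtain ⟨C', hC', L', hL', hCL⟩ := h
  refine ⟨Real.exp C' / M 0, div_pos (Real.exp_pos _) (hpos 0), L', hL', ?_⟩
  intro p q
  set k := p + q with hk
  set t := M (k + 1) / M k with hT
  have htpos : 0 < t := div_pos (hpos (k + 1)) (hpos k)
  set u := t / L' with hu
  have hupos : 0 < u := div_pos htpos hL'
  have htu : t = L' * u := by
    rw [hu, mul_div_cancel₀ _ hL'.ne']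
  -- from hypothesis: 2 * omega(u) ≤ omega(t) + C'
  have h2 : 2 * omegaM M u ≤ omegaM M t + C' := by
    have := hCL u hupos.le
    rwa [← htu] at this
  -- M k ≤ t^k * M 0 * exp (- omega t)
  have h3 : M k * Real.exp (omegaM M t) ≤ t ^ k * M 0 := by
    have := omegaM_le M hpos hM1 k
    rw [← hT] at this
    calc M k * Real.exp (omegaM M t) ≤ M k * (t ^ k * M 0 / M k) :=
          mul_le_mul_of_nonneg_left this (hpos k).le
      _ = t ^ k * M 0 := by
          rw [mul_div_assoc', mul_comm (M k), mul_div_assoc, div_self (hpos k).ne', mul_one]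
  -- u^p M0 exp(-ω u) ≤ M p i.e. u^p * M 0 ≤ M p * exp(ω u)
  have hA : ∀ r : ℕ, u ^ r * M 0 ≤ M r * Real.exp (omegaM M u) := by
    intro r
    have := le_omegaM M hpos hws u hupos r
    calc u ^ r * M 0 = (u ^ r * M 0 / M r) * M r :=
          (div_mul_cancel₀ _ (hpos r).ne').symm
      _ ≤ Real.exp (omegaM M u) * M r :=
          mul_le_mul_of_nonneg_right this (hpos r).le
      _ = M r * Real.exp (omegaM M u) := by ring
  -- exp bound: exp(ω t) ≥ exp(2 ω u - C')
  have h4 : Real.exp (2 * omegaM M u - C') ≤ Real.exp (omegaM M t) :=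
    Real.exp_le_exp.mpr (by linarith)
  -- combine
  have h5 : M k * Real.exp (2 * omegaM M u - C') ≤ t ^ k * M 0 :=
    le_trans (mul_le_mul_of_nonneg_left h4 (hpos k).le) h3
  -- t^k = L'^k * u^k
  have hE : Real.exp (2 * omegaM M u - C') =
      Real.exp (omegaM M u) * Real.exp (omegaM M u) / Real.exp C' := by
    rw [← Real.exp_add, ← Real.exp_sub]; ring_nf
  have hMk : M k * (Real.exp (omegaM M u) * Real.exp (omegaM M u)) ≤
      Real.exp C' * (L' ^ k * u ^ k) * M 0 := by
    have := h5
    rw [hE] at this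
    rw [htu, mul_pow] at this
    have hexpC : (0:ℝ) < Real.exp C' := Real.exp_pos _
    calc M k * (Real.exp (omegaM M u) * Real.exp (omegaM M u))
        = (M k * (Real.exp (omegaM M u) * Real.exp (omegaM M u) / Real.exp C')) * Real.exp C' := by
          rw [mul_assoc, div_mul_cancel₀ _ (Real.exp_pos C').ne']
      _ ≤ (L' ^ k * u ^ k * M 0) * Real.exp C' :=
          mul_le_mul_of_nonneg_right this hexpC.le
      _ = Real.exp C' * (L' ^ k * u ^ k) * M 0 := by ring
  set E := Real.exp (omegaM M u) with hEdef
  have hEpos : 0 < E := Real.exp_pos _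
  have hM0 : M 0 ≠ 0 := (hpos 0).ne'
  have hApq : (u ^ p * M 0) * (u ^ q * M 0) ≤ (M p * E) * (M q * E) :=
    mul_le_mul (hA p) (hA q)
      (mul_pos (pow_pos hupos q) (hpos 0)).le
      (mul_pos (hpos p) hEpos).le
  have huk : u ^ p * u ^ q = u ^ k := by rw [← pow_add]
  have key2 : M k * (M 0 * M 0) * (E * E) ≤
      Real.exp C' * L' ^ k * (M p * M q) * M 0 * (E * E) := by
    calc M k * (M 0 * M 0) * (E * E) = (M k * (E * E)) * (M 0 * M 0) := by ring
      _ ≤ (Real.exp C' * (L' ^ k * u ^ k) * M 0) * (M 0 * M 0) :=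
          mul_le_mul_of_nonneg_right hMk (mul_pos (hpos 0) (hpos 0)).le
      _ = Real.exp C' * L' ^ k * M 0 * ((u ^ p * u ^ q) * (M 0 * M 0)) := by
          rw [huk]; ring
      _ = Real.exp C' * L' ^ k * M 0 * ((u ^ p * M 0) * (u ^ q * M 0)) := by ring
      _ ≤ Real.exp C' * L' ^ k * M 0 * ((M p * E) * (M q * E)) := by
          exact mul_le_mul_of_nonneg_left hApq
            (mul_pos (mul_pos (Real.exp_pos C') (pow_pos hL' k)) (hpos 0)).le
      _ = Real.exp C' * L' ^ k * (M p * M q) * M 0 * (E * E) := by ring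
  have key3 : M k * (M 0 * M 0) ≤ Real.exp C' * L' ^ k * (M p * M q) * M 0 :=
    le_of_mul_le_mul_right key2 (mul_pos hEpos hEpos)
  have hrhs : Real.exp C' / M 0 * L' ^ k * M p * M q * (M 0 * M 0) =
      Real.exp C' * L' ^ k * (M p * M q) * M 0 := by
    field_simp
  have hfinal : M k * (M 0 * M 0) ≤
      Real.exp C' / M 0 * L' ^ k * M p * M q * (M 0 * M 0) := by
    rw [hrhs]; exact key3
  have hM00 : (0 : ℝ) < M 0 * M 0 := mul_pos (hpos 0) (hpos 0)
  exact le_of_mul_le_mul_right hfinal hM00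
end

section
/- Let M be a weight sequence satisfying log-convexity (M.1), let m ∈ ℤ_{>0}, and suppose (a_p)_{p∈ℕ} is a complex sequence such that for every n ∈ ℕ, sup_p n^p |a_p| / (p!·M_p^m) < ∞. Define b_p = (mj)!/j! · a_j if p = mj for some j ∈ ℕ, and b_p = 0 otherwise. Then for every n ∈ ℕ, sup_p n^p |b_p| / (p!·M_p) < ∞. -/
/-!
Log-convexity (M.1) makes `M (p + 1) / M p` nondecreasing, which gives
`M i * M j ≤ M 0 * M (i + j)` and hence `M j ^ m * M 0 ≤ M 0 ^ m * M (m * j)`.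
At `p = m * j` the factorials cancel, so
`n ^ p ‖b p‖ / (p! M p) = (n ^ m) ^ j ‖a j‖ / (j! M p)`, which the last inequality bounds by a
constant multiple of `(n ^ m) ^ j ‖a j‖ / (j! (M j) ^ m)`: the hypothesis on `a` at `n ^ m`.
-/

open Filter

namespace LogConvexSeq

variable {M : ℕ → ℝ}

theorem monotone_succ_div (hpos : ∀ p, 0 < M p)
    (hM1 : ∀ p : ℕ, 1 ≤ p → (M p) ^ 2 ≤ M (p - 1) * M (p + 1)) :
    Monotone (fun p : ℕ => M (p + 1) / M p) := by
  refine monotone_nat_of_le_succ fun p => ?_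
  rw [div_le_div_iff₀ (hpos p) (hpos (p + 1))]
  have h := hM1 (p + 1) (by omega)
  simp only [Nat.add_sub_cancel] at h
  nlinarith [h]

theorem mul_le_zero_mul_add (hpos : ∀ p, 0 < M p)
    (hM1 : ∀ p : ℕ, 1 ≤ p → (M p) ^ 2 ≤ M (p - 1) * M (p + 1)) (i j : ℕ) :
    M i * M j ≤ M 0 * M (i + j) := by
  induction i with
  | zero => simp
  | succ i ih =>
    have hratio : M (i + 1) / M i ≤ M (i + j + 1) / M (i + j) :=
      monotone_succ_div hpos hM1 (by omega : i ≤ i + j)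
    rw [div_le_div_iff₀ (hpos i) (hpos (i + j))] at hratio
    rw [show i + 1 + j = i + j + 1 by omega]
    refine le_of_mul_le_mul_right ?_ (hpos (i + j))
    calc M (i + 1) * M j * M (i + j) = M (i + 1) * M (i + j) * M j := by ring
      _ ≤ M (i + j + 1) * M i * M j := mul_le_mul_of_nonneg_right hratio (hpos j).le
      _ = M (i + j + 1) * (M i * M j) := by ring
      _ ≤ M (i + j + 1) * (M 0 * M (i + j)) :=
          mul_le_mul_of_nonneg_left ih (hpos (i + j + 1)).le
      _ = M 0 * M (i + j + 1) * M (i + j) := by ring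

theorem pow_mul_zero_le (hpos : ∀ p, 0 < M p)
    (hM1 : ∀ p : ℕ, 1 ≤ p → (M p) ^ 2 ≤ M (p - 1) * M (p + 1)) (k j : ℕ) :
    M j ^ k * M 0 ≤ M 0 ^ k * M (k * j) := by
  induction k with
  | zero => simp
  | succ k ih =>
    calc M j ^ (k + 1) * M 0 = M j * (M j ^ k * M 0) := by ring
      _ ≤ M j * (M 0 ^ k * M (k * j)) := mul_le_mul_of_nonneg_left ih (hpos j).le
      _ = M 0 ^ k * (M j * M (k * j)) := by ring
      _ ≤ M 0 ^ k * (M 0 * M (j + k * j)) :=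
          mul_le_mul_of_nonneg_left (mul_le_zero_mul_add hpos hM1 j (k * j))
            (pow_nonneg (hpos 0).le k)
      _ = M 0 ^ (k + 1) * M ((k + 1) * j) := by rw [show j + k * j = (k + 1) * j by ring]; ring

theorem norm_mul_factorial_div_le (hpos : ∀ p, 0 < M p)
    (hM1 : ∀ p : ℕ, 1 ≤ p → (M p) ^ 2 ≤ M (p - 1) * M (p + 1)) (m j n : ℕ) (x : ℂ) :
    (n : ℝ) ^ (m * j) * ‖((m * j).factorial : ℂ) / (j.factorial : ℂ) * x‖ /
        (((m * j).factorial : ℝ) * M (m * j)) ≤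
      M 0 ^ m / M 0 * (((n ^ m : ℕ) : ℝ) ^ j * ‖x‖ / ((j.factorial : ℝ) * M j ^ m)) := by
  have hMpow := pow_mul_zero_le hpos hM1 m j
  have hM0 := hpos 0
  have hMp := hpos (m * j)
  have hMj := pow_pos (hpos j) m
  rw [norm_mul, norm_div, Complex.norm_natCast, Complex.norm_natCast, Nat.cast_pow, ← pow_mul]
  calc (n : ℝ) ^ (m * j) * (((m * j).factorial : ℝ) / j.factorial * ‖x‖) /
        (((m * j).factorial : ℝ) * M (m * j))
      = (n : ℝ) ^ (m * j) * ‖x‖ / (j.factorial * M j ^ m) * (M j ^ m / M (m * j)) := by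
        field_simp
    _ ≤ (n : ℝ) ^ (m * j) * ‖x‖ / (j.factorial * M j ^ m) * (M 0 ^ m / M 0) := by
        refine mul_le_mul_of_nonneg_left ?_ (by positivity)
        rwa [div_le_div_iff₀ hMp hM0]
    _ = _ := mul_comm _ _

end LogConvexSeq

theorem stmt_4_general (M : ℕ → ℝ) (hpos : ∀ p, 0 < M p)
    (hM1 : ∀ p : ℕ, 1 ≤ p → (M p) ^ 2 ≤ M (p - 1) * M (p + 1))
    (m : ℕ) (a : ℕ → ℂ)
    (ha : ∀ n : ℕ, ∃ C : ℝ, ∀ p : ℕ,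
      (n : ℝ) ^ p * ‖a p‖ / ((p.factorial : ℝ) * (M p) ^ m) ≤ C)
    (b : ℕ → ℂ)
    (hb : ∀ p : ℕ, b p = if m ∣ p then
      ((p.factorial : ℂ) / ((p / m).factorial : ℂ)) * a (p / m) else 0) :
    ∀ n : ℕ, ∃ C : ℝ, ∀ p : ℕ,
      (n : ℝ) ^ p * ‖b p‖ / ((p.factorial : ℝ) * M p) ≤ C := by
  intro n
  obtain ⟨C, hC⟩ := ha (n ^ m)
  have hC0 : 0 ≤ C := le_trans (by have := hpos 0; positivity) (hC 0)
  have hK : 0 ≤ M 0 ^ m / M 0 := div_nonneg (pow_nonneg (hpos 0).le m) (hpos 0).le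
  refine ⟨M 0 ^ m / M 0 * C, fun p => ?_⟩
  rw [hb p]
  split_ifs with hdvd
  · have hp := Nat.mul_div_cancel' hdvd
    generalize p / m = j at hp ⊢
    subst hp
    exact (LogConvexSeq.norm_mul_factorial_div_le hpos hM1 m j n (a j)).trans
      (mul_le_mul_of_nonneg_left (hC j) hK)
  · simp only [norm_zero, mul_zero, zero_div]
    exact mul_nonneg hK hC0

theorem stmt_4 (M : ℕ → ℝ) (hpos : ∀ p, 0 < M p)
    (hws : Tendsto (fun p : ℕ => (M p) ^ ((p : ℝ)⁻¹)) atTop atTop)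
    (hM1 : ∀ p : ℕ, 1 ≤ p → (M p) ^ 2 ≤ M (p - 1) * M (p + 1))
    (m : ℕ) (hm : 0 < m) (a : ℕ → ℂ)
    (ha : ∀ n : ℕ, ∃ C : ℝ, ∀ p : ℕ,
      (n : ℝ) ^ p * ‖a p‖ / ((p.factorial : ℝ) * (M p) ^ m) ≤ C)
    (b : ℕ → ℂ)
    (hb : ∀ p : ℕ, b p = if m ∣ p then
      ((p.factorial : ℂ) / ((p / m).factorial : ℂ)) * a (p / m) else 0) :
    ∀ n : ℕ, ∃ C : ℝ, ∀ p : ℕ,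
      (n : ℝ) ^ p * ‖b p‖ / ((p.factorial : ℝ) * M p) ≤ C :=
  stmt_4_general M hpos hM1 m a ha b hb
end

section
/- Let M be a weight sequence and s > 0. Define the growth index γ(M) as the supremum of all γ > 0 such that M satisfies (P_γ): there is a sequence (n_p)_{p≥1} of positive reals with (n_p / p^γ) non-decreasing and a constant C > 0 with C^{-1} n_p ≤ M_p/M_{p−1} ≤ C n_p for all p ≥ 1. Then γ(M^s) = s·γ(M), where M^s = (M_p^s). -/
open Filter

/-- Property `(P_γ)` of a weight sequence. -/
def Pgamma (M : ℕ → ℝ) (γ : ℝ) : Prop :=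
  ∃ n : ℕ → ℝ, (∀ p : ℕ, 1 ≤ p → 0 < n p) ∧
    (∀ p q : ℕ, 1 ≤ p → p ≤ q → n p / (p : ℝ) ^ γ ≤ n q / (q : ℝ) ^ γ) ∧
    ∃ C > (0 : ℝ), ∀ p : ℕ, 1 ≤ p →
      C⁻¹ * n p ≤ M p / M (p - 1) ∧ M p / M (p - 1) ≤ C * n p

/-- The growth index `γ(M)`, a value in `[0, ∞]`. -/
noncomputable def gammaIndex (M : ℕ → ℝ) : ENNReal :=
  ⨆ γ ∈ {γ : ℝ | 0 < γ ∧ Pgamma M γ}, ENNReal.ofReal γ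

lemma pgamma_rpow {M : ℕ → ℝ} (hpos : ∀ p, 0 < M p) {s γ : ℝ} (hs : 0 < s)
    (h : Pgamma M γ) : Pgamma (fun p => M p ^ s) (s * γ) := by
  obtain ⟨n, hn0, hmono, C, hC, hbd⟩ := h
  refine ⟨fun p => n p ^ s, fun p hp => Real.rpow_pos_of_pos (hn0 p hp) s, ?_,
    C ^ s, Real.rpow_pos_of_pos hC s, ?_⟩
  · intro p q hp hpq
    have hp0 : (0:ℝ) < p := by exact_mod_cast hp
    have hq0 : (0:ℝ) < q := lt_of_lt_of_le hp0 (by exact_mod_cast hpq)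
    have key : (n p / (p:ℝ)^γ) ^ s ≤ (n q / (q:ℝ)^γ) ^ s :=
      Real.rpow_le_rpow (div_nonneg (hn0 p hp).le (Real.rpow_nonneg hp0.le γ))
        (hmono p q hp hpq) hs.le
    calc n p ^ s / (p:ℝ) ^ (s*γ) = (n p / (p:ℝ)^γ) ^ s := by
          rw [Real.div_rpow (hn0 p hp).le (Real.rpow_nonneg hp0.le γ),
            mul_comm s γ, Real.rpow_mul hp0.le]
      _ ≤ (n q / (q:ℝ)^γ) ^ s := key
      _ = n q ^ s / (q:ℝ) ^ (s*γ) := by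
          rw [Real.div_rpow (hn0 q (hp.trans hpq)).le (Real.rpow_nonneg hq0.le γ),
            mul_comm s γ, Real.rpow_mul hq0.le]
  · intro p hp
    obtain ⟨h1, h2⟩ := hbd p hp
    have hq : M p ^ s / M (p-1) ^ s = (M p / M (p-1)) ^ s :=
      (Real.div_rpow (hpos p).le (hpos (p-1)).le s).symm
    constructor
    · have := Real.rpow_le_rpow
        (mul_nonneg (inv_nonneg.mpr hC.le) (hn0 p hp).le) h1 hs.le
      rw [Real.mul_rpow (inv_nonneg.mpr hC.le) (hn0 p hp).le,
        Real.inv_rpow hC.le] at this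
      simpa [hq] using this
    · have := Real.rpow_le_rpow
        (div_nonneg (hpos p).le (hpos (p-1)).le) h2 hs.le
      rw [Real.mul_rpow hC.le (hn0 p hp).le] at this
      simpa [hq] using this

theorem stmt_7 (M : ℕ → ℝ) (hpos : ∀ p, 0 < M p)
    (hws : Tendsto (fun p : ℕ => (M p) ^ ((p : ℝ)⁻¹)) atTop atTop)
    (s : ℝ) (hs : 0 < s) :
    gammaIndex (fun p => (M p) ^ s) = ENNReal.ofReal s * gammaIndex M := by
  unfold gammaIndex
  apply le_antisymm
  · refine iSup₂_le fun γ hγ => ?_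
    obtain ⟨hγ0, hP⟩ := hγ
    have h2 := pgamma_rpow (M := fun p => M p ^ s)
      (fun p => Real.rpow_pos_of_pos (hpos p) s) (inv_pos.mpr hs) hP
    have heq : (fun p => (M p ^ s) ^ s⁻¹) = M := funext fun p => by
      rw [← Real.rpow_mul (hpos p).le, mul_inv_cancel₀ hs.ne', Real.rpow_one]
    rw [heq] at h2
    have hmem : s⁻¹ * γ ∈ {γ : ℝ | 0 < γ ∧ Pgamma M γ} := ⟨by positivity, h2⟩
    have : ENNReal.ofReal γ = ENNReal.ofReal s * ENNReal.ofReal (s⁻¹ * γ) := by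
      rw [← ENNReal.ofReal_mul hs.le, ← mul_assoc, mul_inv_cancel₀ hs.ne', one_mul]
    rw [this]
    exact mul_le_mul_right (le_iSup₂ (f := fun δ (_ : δ ∈ {γ : ℝ | 0 < γ ∧ Pgamma M γ}) =>
      ENNReal.ofReal δ) _ hmem) _
  · rw [ENNReal.mul_iSup]
    refine iSup_le fun γ => ?_
    rw [ENNReal.mul_iSup]
    refine iSup_le fun hγ => ?_
    have hP := pgamma_rpow hpos hs hγ.2
    have hmem : s * γ ∈ {γ : ℝ | 0 < γ ∧ Pgamma (fun p => M p ^ s) γ} :=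
      ⟨mul_pos hs hγ.1, hP⟩
    calc ENNReal.ofReal s * ENNReal.ofReal γ = ENNReal.ofReal (s*γ) :=
          (ENNReal.ofReal_mul hs.le).symm
      _ ≤ _ := le_iSup₂ (f := fun δ (_ : δ ∈ {γ : ℝ | 0 < γ ∧ Pgamma (fun p => M p ^ s) γ}) =>
          ENNReal.ofReal δ) _ hmem
end
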